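/- arXiv:2408.07256 — 2 statements merged into one kernel-verified Lean document; each statement's English description precedes it below -/
import Mathlib

section
/- Let P ∈ ℝ^{n×d}, set v = (1/n)Pᵀe, P_v = P − e vᵀ, L = VᵀP_v ∈ ℝ^{(n−1)×d}, and let Q ∈ ℝ^{d×d} be orthogonal and R ∈ ℝ^{d×(n−1)} be upper triangular (R_{ij} = 0 for i > j) with Lᵀ = QR. Then: (a) the following four conditions are equivalent: K*(F(P))P = 0; K*(F(P_v))P_v = 0; VᵀK*(F(VL))VL = 0; VᵀK*(F(VRᵀ))VRᵀ = 0. (b) The following four conditions are also equivalent: [K*(F(P))P = 0 and Q_P(ΔP) ≥ 0 for all ΔP ∈ ℝ^{n×d}]; [K*(F(P_v))P_v = 0 and Q_{P_v}(ΔP) ≥ 0 for all ΔP ∈ ℝ^{n×d}]; [VᵀK*(F(VL))VL = 0 and Q_{VL}(VΔL) ≥ 0 for all ΔL ∈ ℝ^{(n−1)×d}]; [VᵀK*(F(VRᵀ))VRᵀ = 0 and Q_{VRᵀ}(VΔL) ≥ 0 for all ΔL ∈ ℝ^{(n−1)×d}]. -/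
open Matrix

attribute [local instance] Matrix.frobeniusNormedAddCommGroup Matrix.frobeniusNormedSpace

noncomputable section

/-- The all-ones vector in `ℝⁿ`. -/
def eV (n : ℕ) : Fin n → ℝ := fun _ => 1

/-- The Lindenstrauss operator `K(G) = diag(G)eᵀ + e diag(G)ᵀ − 2G`. -/
def Kop {n : ℕ} (G : Matrix (Fin n) (Fin n) ℝ) : Matrix (Fin n) (Fin n) ℝ :=
  vecMulVec G.diag (eV n) + vecMulVec (eV n) G.diag - (2 : ℝ) • G

/-- The adjoint `K*(S) = 2(Diag(Se) − S)`. -/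
def Kstar {n : ℕ} (S : Matrix (Fin n) (Fin n) ℝ) : Matrix (Fin n) (Fin n) ℝ :=
  (2 : ℝ) • (Matrix.diagonal (S *ᵥ eV n) - S)

/-- `F(P) = K(PPᵀ) − D̄`, where `D̄ = K(P̄P̄ᵀ)`. -/
def Fm {n d : ℕ} (Pbar P : Matrix (Fin n) (Fin d) ℝ) : Matrix (Fin n) (Fin n) ℝ :=
  Kop (P * Pᵀ) - Kop (Pbar * Pbarᵀ)

/-- `f(P) = (1/2)‖F(P)‖²` with the Frobenius norm. -/
def fObj {n d : ℕ} (Pbar P : Matrix (Fin n) (Fin d) ℝ) : ℝ :=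
  (1 / 2) * ‖Fm Pbar P‖ ^ 2

/-- The Hessian quadratic form of `f` at `P`:
`Q_P(ΔP) = ‖K(PΔPᵀ + ΔPPᵀ)‖² + 2⟨F(P), K(ΔPΔPᵀ)⟩`. -/
def QForm {n d : ℕ} (Pbar P ΔP : Matrix (Fin n) (Fin d) ℝ) : ℝ :=
  ‖Kop (P * ΔPᵀ + ΔP * Pᵀ)‖ ^ 2 +
    2 * Matrix.trace ((Fm Pbar P)ᵀ * Kop (ΔP * ΔPᵀ))

/-- `x` is a local minimizer of `g`: there is `δ > 0` with `g x ≤ g y` whenever `‖y − x‖ ≤ δ`. -/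
def IsLocMin {E : Type*} [SeminormedAddCommGroup E] (g : E → ℝ) (x : E) : Prop :=
  ∃ δ > 0, ∀ y, ‖y - x‖ ≤ δ → g x ≤ g y

lemma Kop_apply {n : ℕ} (G : Matrix (Fin n) (Fin n) ℝ) (i j : Fin n) :
    Kop G i j = G i i + G j j - 2 * G i j := by
  simp [Kop, vecMulVec_apply, eV, Matrix.diag]

def RowDiff {n d : ℕ} (A B : Matrix (Fin n) (Fin d) ℝ) : Prop :=
  ∀ i j k, A i k - A j k = B i k - B j k

lemma Kop_sq_congr {n d : ℕ} {A A' : Matrix (Fin n) (Fin d) ℝ} (hA : RowDiff A A') :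
    Kop (A * Aᵀ) = Kop (A' * A'ᵀ) := by
  ext i j
  rw [Kop_apply, Kop_apply]
  simp only [Matrix.mul_apply, Matrix.transpose_apply, Finset.mul_sum,
    ← Finset.sum_add_distrib, ← Finset.sum_sub_distrib]
  refine Finset.sum_congr rfl fun k _ => ?_
  linear_combination ((A i k - A j k) + (A' i k - A' j k)) * hA i j k

lemma Kop_mixed_congr {n d : ℕ} {A B A' B' : Matrix (Fin n) (Fin d) ℝ}
    (hA : RowDiff A A') (hB : RowDiff B B') :
    Kop (A * Bᵀ + B * Aᵀ) = Kop (A' * B'ᵀ + B' * A'ᵀ) := by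
  ext i j
  rw [Kop_apply, Kop_apply]
  simp only [Matrix.add_apply, Matrix.mul_apply, Matrix.transpose_apply, Finset.mul_sum,
    ← Finset.sum_add_distrib, ← Finset.sum_sub_distrib]
  refine Finset.sum_congr rfl fun k _ => ?_
  linear_combination (2*(B i k - B j k)) * hA i j k + (2*(A' i k - A' j k)) * hB i j k

lemma sum_Kstar_row {n : ℕ} (S : Matrix (Fin n) (Fin n) ℝ) (i : Fin n) :
    ∑ k, Kstar S i k = 0 := by
  simp only [Kstar, Matrix.smul_apply, Matrix.sub_apply, Matrix.diagonal_apply,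
    Matrix.mulVec, dotProduct, eV, mul_one, smul_eq_mul]
  simp only [mul_sub, mul_ite, mul_zero, Finset.sum_sub_distrib, Finset.sum_ite_eq,
    Finset.mem_univ, if_true, Finset.mul_sum, sub_eq_zero]

lemma sum_Kstar_col {n : ℕ} (S : Matrix (Fin n) (Fin n) ℝ) (hS : Sᵀ = S) (j : Fin n) :
    ∑ k, Kstar S k j = 0 := by
  have hcol : ∀ k l : Fin n, S k l = S l k := fun k l => (congrFun (congrFun hS k) l).symm
  simp only [Kstar, Matrix.smul_apply, Matrix.sub_apply, Matrix.diagonal_apply,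
    Matrix.mulVec, dotProduct, eV, mul_one, smul_eq_mul]
  simp only [mul_sub, mul_ite, mul_zero, Finset.sum_sub_distrib, Finset.sum_ite_eq',
    Finset.mem_univ, if_true, Finset.mul_sum, sub_eq_zero]
  exact Finset.sum_congr rfl fun l _ => by rw [hcol j l]

lemma Kstar_mul_vecMulVec {n d : ℕ} (S : Matrix (Fin n) (Fin n) ℝ) (v : Fin d → ℝ) :
    Kstar S * vecMulVec (eV n) v = 0 := by
  ext i j
  have h := sum_Kstar_row S i
  calc (Kstar S * vecMulVec (eV n) v) i j = ∑ k, Kstar S i k * v j := by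
        simp [Matrix.mul_apply, vecMulVec_apply, eV]
    _ = (∑ k, Kstar S i k) * v j := by rw [Finset.sum_mul]
    _ = 0 := by rw [h, zero_mul]

lemma vecMulVec_mul_Kstar {n : ℕ} (S : Matrix (Fin n) (Fin n) ℝ) (hS : Sᵀ = S) :
    vecMulVec (eV n) (eV n) * Kstar S = 0 := by
  ext i j
  have h := sum_Kstar_col S hS j
  calc (vecMulVec (eV n) (eV n) * Kstar S) i j = ∑ k, Kstar S k j := by
        simp [Matrix.mul_apply, vecMulVec_apply, eV]
    _ = 0 := h


lemma Fm_congr {n d : ℕ} (Pbar : Matrix (Fin n) (Fin d) ℝ) {A A' : Matrix (Fin n) (Fin d) ℝ}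
    (hA : RowDiff A A') : Fm Pbar A = Fm Pbar A' := by
  unfold Fm; rw [Kop_sq_congr hA]

lemma Fm_symm {n d : ℕ} (Pbar P : Matrix (Fin n) (Fin d) ℝ) : (Fm Pbar P)ᵀ = Fm Pbar P := by
  have hK : ∀ A : Matrix (Fin n) (Fin d) ℝ, (Kop (A * Aᵀ))ᵀ = Kop (A * Aᵀ) := by
    intro A
    ext i j
    rw [Matrix.transpose_apply, Kop_apply, Kop_apply]
    simp only [Matrix.mul_apply, Matrix.transpose_apply]
    rw [Finset.sum_congr rfl fun k _ => mul_comm (A j k) (A i k)]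
    ring
  unfold Fm
  rw [Matrix.transpose_sub, hK, hK]

lemma VVt_eq {n : ℕ} (hn : 0 < n) (V : Matrix (Fin n) (Fin (n-1)) ℝ)
    (hV : Vᵀ * V = 1) (hVe : Vᵀ *ᵥ eV n = 0) :
    V * Vᵀ = 1 - ((n:ℝ)⁻¹) • vecMulVec (eV n) (eV n) := by
  have hn' : (n:ℝ) ≠ 0 := Nat.cast_ne_zero.mpr hn.ne'
  set E := vecMulVec (eV n) (eV n) with hE
  set W := V * Vᵀ with hW
  set c : ℝ := (n:ℝ)⁻¹ with hc
  set C := c • E with hC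
  have hEsym : Eᵀ = E := by ext i j; simp [hE, vecMulVec_apply, eV]
  have hWsym : Wᵀ = W := by rw [hW, Matrix.transpose_mul, Matrix.transpose_transpose]
  have hEV : E * V = 0 := by
    ext i j
    have h := congrFun hVe j
    simp only [Matrix.mulVec, dotProduct, Matrix.transpose_apply, eV, mul_one,
      Pi.zero_apply] at h
    simp [hE, Matrix.mul_apply, vecMulVec_apply, eV, h]
  have hVE : Vᵀ * E = 0 := by
    have h := congrArg Matrix.transpose hEV
    rw [Matrix.transpose_mul, hEsym, Matrix.transpose_zero] at h
    exact h
  have hEE : E * E = (n:ℝ) • E := by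
    ext i j
    simp [hE, Matrix.mul_apply, vecMulVec_apply, eV, Finset.card_univ]
  have hCC : C * C = C := by
    rw [hC, Matrix.smul_mul, Matrix.mul_smul, hEE, smul_smul, smul_smul]
    congr 1
    rw [hc]
    field_simp
  have hCW : C * W = 0 := by
    rw [hC, hW, Matrix.smul_mul, ← Matrix.mul_assoc, hEV, Matrix.zero_mul, smul_zero]
  have hWC : W * C = 0 := by
    rw [hC, hW, Matrix.mul_smul, Matrix.mul_assoc, hVE, Matrix.mul_zero, smul_zero]
  have hWW : W * W = W := by
    rw [hW, Matrix.mul_assoc, ← Matrix.mul_assoc Vᵀ V Vᵀ, hV, Matrix.one_mul]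
  set M := 1 - C - W with hM
  have hMsym : Mᵀ = M := by
    rw [hM, Matrix.transpose_sub, Matrix.transpose_sub, Matrix.transpose_one, hC,
      Matrix.transpose_smul, hEsym, hWsym]
  have hMM : M * M = M := by
    rw [hM, mul_sub, mul_sub, mul_one, sub_mul, sub_mul, one_mul, sub_mul, sub_mul,
      one_mul, hCC, hWC, hCW, hWW]
    abel
  have htrE : Matrix.trace E = (n:ℝ) := by
    simp [Matrix.trace, hE, Matrix.diag, vecMulVec_apply, eV, Finset.card_univ]
  have htrW : Matrix.trace W = (n:ℝ) - 1 := by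
    rw [hW, Matrix.trace_mul_comm, hV, Matrix.trace_one]
    simp only [Fintype.card_fin]
    rw [Nat.cast_sub hn, Nat.cast_one]
  have htrM : Matrix.trace M = 0 := by
    rw [hM, Matrix.trace_sub, Matrix.trace_sub, Matrix.trace_one, hC, Matrix.trace_smul,
      htrE, htrW]
    simp only [Fintype.card_fin, smul_eq_mul, hc]
    field_simp
    ring
  have hsq : ∑ i, ∑ j, (M i j)^2 = 0 := by
    have h1 : Matrix.trace (M * M) = ∑ i, ∑ j, M i j * M j i := by
      simp [Matrix.trace, Matrix.diag, Matrix.mul_apply]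
    have hsym : ∀ i j, M j i = M i j := fun i j => congrFun (congrFun hMsym i) j
    calc ∑ i, ∑ j, (M i j)^2 = ∑ i, ∑ j, M i j * M j i := by
          refine Finset.sum_congr rfl fun i _ => Finset.sum_congr rfl fun j _ => ?_
          rw [hsym i j]; ring
      _ = Matrix.trace (M * M) := h1.symm
      _ = 0 := by rw [hMM, htrM]
  have hM0 : M = 0 := by
    ext i j
    have h1 := (Finset.sum_eq_zero_iff_of_nonneg (fun i _ =>
      Finset.sum_nonneg fun j _ => sq_nonneg (M i j))).mp hsq i (Finset.mem_univ i)
    have h2 := (Finset.sum_eq_zero_iff_of_nonneg (fun j _ => sq_nonneg (M i j))).mp h1 j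
      (Finset.mem_univ j)
    simpa using pow_eq_zero_iff (n := 2) (by norm_num) |>.mp h2
  have : (1 : Matrix (Fin n) (Fin n) ℝ) - C - W = 0 := hM0
  have h := sub_eq_zero.mp this
  rw [← h]


lemma rowdiff_refl {n d : ℕ} (A : Matrix (Fin n) (Fin d) ℝ) : RowDiff A A := fun _ _ _ => rfl

/-- equivalence of the first-order (and of the first- plus second-order)
necessary conditions at `P`, `P_v`, `L` and `Rᵀ`. -/
theorem stmt_9 {n d : ℕ} (hn : 0 < n) (hd : 0 < d)
    (Pbar : Matrix (Fin n) (Fin d) ℝ) (hPbar : Pbarᵀ *ᵥ eV n = 0)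
    (V : Matrix (Fin n) (Fin (n - 1)) ℝ) (hV : Vᵀ * V = 1) (hVe : Vᵀ *ᵥ eV n = 0)
    (P : Matrix (Fin n) (Fin d) ℝ)
    (v : Fin d → ℝ) (hv : v = ((n : ℝ)⁻¹) • (Pᵀ *ᵥ eV n))
    (Pv : Matrix (Fin n) (Fin d) ℝ) (hPv : Pv = P - vecMulVec (eV n) v)
    (L : Matrix (Fin (n - 1)) (Fin d) ℝ) (hL : L = Vᵀ * Pv)
    (Q : Matrix (Fin d) (Fin d) ℝ) (hQ : Qᵀ * Q = 1)
    (R : Matrix (Fin d) (Fin (n - 1)) ℝ)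
    (hR : ∀ (i : Fin d) (j : Fin (n - 1)), (j : ℕ) < (i : ℕ) → R i j = 0)
    (hQR : Lᵀ = Q * R) :
    (((Kstar (Fm Pbar P) * P = 0) ↔ (Kstar (Fm Pbar Pv) * Pv = 0)) ∧
     ((Kstar (Fm Pbar Pv) * Pv = 0) ↔ (Vᵀ * Kstar (Fm Pbar (V * L)) * (V * L) = 0)) ∧
     ((Vᵀ * Kstar (Fm Pbar (V * L)) * (V * L) = 0) ↔
       (Vᵀ * Kstar (Fm Pbar (V * Rᵀ)) * (V * Rᵀ) = 0))) ∧
    (((Kstar (Fm Pbar P) * P = 0 ∧ ∀ ΔP, 0 ≤ QForm Pbar P ΔP) ↔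
       (Kstar (Fm Pbar Pv) * Pv = 0 ∧ ∀ ΔP, 0 ≤ QForm Pbar Pv ΔP)) ∧
     ((Kstar (Fm Pbar Pv) * Pv = 0 ∧ ∀ ΔP, 0 ≤ QForm Pbar Pv ΔP) ↔
       (Vᵀ * Kstar (Fm Pbar (V * L)) * (V * L) = 0 ∧
         ∀ ΔL : Matrix (Fin (n - 1)) (Fin d) ℝ, 0 ≤ QForm Pbar (V * L) (V * ΔL))) ∧
     ((Vᵀ * Kstar (Fm Pbar (V * L)) * (V * L) = 0 ∧
         ∀ ΔL : Matrix (Fin (n - 1)) (Fin d) ℝ, 0 ≤ QForm Pbar (V * L) (V * ΔL)) ↔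
       (Vᵀ * Kstar (Fm Pbar (V * Rᵀ)) * (V * Rᵀ) = 0 ∧
         ∀ ΔL : Matrix (Fin (n - 1)) (Fin d) ℝ, 0 ≤ QForm Pbar (V * Rᵀ) (V * ΔL)))) := by
  
  have hn' : (n:ℝ) ≠ 0 := Nat.cast_ne_zero.mpr hn.ne'
  have hrdP : RowDiff Pv P := by
    intro i j k
    simp only [hPv, Matrix.sub_apply, vecMulVec_apply, eV, one_mul]
    ring
  have hFm : Fm Pbar Pv = Fm Pbar P := Fm_congr Pbar hrdP
  have hFsym : (Fm Pbar Pv)ᵀ = Fm Pbar Pv := Fm_symm _ _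
  have hG : Kstar (Fm Pbar Pv) * Pv = Kstar (Fm Pbar P) * P := by
    rw [hFm, hPv, Matrix.mul_sub, Kstar_mul_vecMulVec, sub_zero]
  have hVVt := VVt_eq hn V hV hVe
  have hPve : Pvᵀ *ᵥ eV n = 0 := by
    funext j
    have hvj : v j = (n:ℝ)⁻¹ * ∑ i, P i j := by
      rw [hv]
      simp [Matrix.mulVec, dotProduct, eV, Matrix.transpose_apply]
    simp only [Matrix.mulVec, dotProduct, Matrix.transpose_apply, hPv,
      Matrix.sub_apply, vecMulVec_apply, eV, mul_one, one_mul, Pi.zero_apply]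
    rw [Finset.sum_sub_distrib, Finset.sum_const, Finset.card_univ, Fintype.card_fin,
      nsmul_eq_mul, hvj]
    field_simp
    ring
  have hEPv : vecMulVec (eV n) (eV n) * Pv = 0 := by
    ext i j
    have h := congrFun hPve j
    simp only [Matrix.mulVec, dotProduct, Matrix.transpose_apply, eV, mul_one,
      Pi.zero_apply] at h
    simp [Matrix.mul_apply, vecMulVec_apply, eV, h]
  have hVL : V * L = Pv := by
    rw [hL, ← Matrix.mul_assoc, hVVt, Matrix.sub_mul, Matrix.one_mul, Matrix.smul_mul, hEPv,
      smul_zero, sub_zero]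
  have iff1 : (Kstar (Fm Pbar P) * P = 0) ↔ (Kstar (Fm Pbar Pv) * Pv = 0) := by rw [hG]
  have iff2 : (Kstar (Fm Pbar Pv) * Pv = 0) ↔ (Vᵀ * Kstar (Fm Pbar (V * L)) * (V * L) = 0) := by
    rw [hVL]
    constructor
    · intro h; rw [Matrix.mul_assoc, h, Matrix.mul_zero]
    · intro h
      have hVG : Vᵀ * (Kstar (Fm Pbar Pv) * Pv) = 0 := by rw [← Matrix.mul_assoc]; exact h
      have hEG : vecMulVec (eV n) (eV n) * (Kstar (Fm Pbar Pv) * Pv) = 0 := by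
        rw [← Matrix.mul_assoc, vecMulVec_mul_Kstar _ hFsym, Matrix.zero_mul]
      calc Kstar (Fm Pbar Pv) * Pv = 1 * (Kstar (Fm Pbar Pv) * Pv) := (Matrix.one_mul _).symm
        _ = (V * Vᵀ + ((n:ℝ)⁻¹) • vecMulVec (eV n) (eV n)) * (Kstar (Fm Pbar Pv) * Pv) := by
            rw [hVVt, sub_add_cancel]
        _ = V * (Vᵀ * (Kstar (Fm Pbar Pv) * Pv)) +
            ((n:ℝ)⁻¹) • (vecMulVec (eV n) (eV n) * (Kstar (Fm Pbar Pv) * Pv)) := by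
            rw [Matrix.add_mul, Matrix.mul_assoc, Matrix.smul_mul]
        _ = 0 := by rw [hVG, hEG, Matrix.mul_zero, smul_zero, add_zero]
  have hLQ : L = Rᵀ * Qᵀ := by
    have h := congrArg Matrix.transpose hQR
    rw [Matrix.transpose_transpose, Matrix.transpose_mul] at h
    exact h
  have hQQ : Q * Qᵀ = 1 := mul_eq_one_comm.mp hQ
  have hVLR : V * L = V * Rᵀ * Qᵀ := by rw [hLQ, ← Matrix.mul_assoc]
  have hGram : (V * L) * (V * L)ᵀ = (V * Rᵀ) * (V * Rᵀ)ᵀ := by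
    rw [hVLR]
    simp only [Matrix.transpose_mul, Matrix.transpose_transpose, Matrix.mul_assoc]
    rw [← Matrix.mul_assoc Qᵀ Q, hQ, Matrix.one_mul]
  have hFLR : Fm Pbar (V * L) = Fm Pbar (V * Rᵀ) := by unfold Fm; rw [hGram]
  have hXQ : Vᵀ * Kstar (Fm Pbar (V * L)) * (V * L) =
      (Vᵀ * Kstar (Fm Pbar (V * Rᵀ)) * (V * Rᵀ)) * Qᵀ := by
    rw [hFLR, hVLR, ← Matrix.mul_assoc]
  have iff3 : (Vᵀ * Kstar (Fm Pbar (V * L)) * (V * L) = 0) ↔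
      (Vᵀ * Kstar (Fm Pbar (V * Rᵀ)) * (V * Rᵀ) = 0) := by
    constructor
    · intro h
      rw [hXQ] at h
      calc Vᵀ * Kstar (Fm Pbar (V * Rᵀ)) * (V * Rᵀ)
          = Vᵀ * Kstar (Fm Pbar (V * Rᵀ)) * (V * Rᵀ) * (Qᵀ * Q) := by
            rw [hQ, Matrix.mul_one]
        _ = (Vᵀ * Kstar (Fm Pbar (V * Rᵀ)) * (V * Rᵀ) * Qᵀ) * Q := by
            simp only [Matrix.mul_assoc]
        _ = 0 := by rw [h, Matrix.zero_mul]
    · intro h; rw [hXQ, h, Matrix.zero_mul]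
  have hQP : ∀ ΔP, QForm Pbar P ΔP = QForm Pbar Pv ΔP := by
    intro ΔP
    unfold QForm
    rw [hFm, Kop_mixed_congr hrdP (rowdiff_refl ΔP)]
  have hQVL : ∀ ΔP, QForm Pbar Pv ΔP = QForm Pbar Pv (V * (Vᵀ * ΔP)) := by
    intro ΔP
    have hform : V * (Vᵀ * ΔP) = ΔP - ((n:ℝ)⁻¹) • (vecMulVec (eV n) (eV n) * ΔP) := by
      rw [← Matrix.mul_assoc, hVVt, Matrix.sub_mul, Matrix.one_mul, Matrix.smul_mul]
    have hrd : RowDiff ΔP (V * (Vᵀ * ΔP)) := by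
      intro i j k
      rw [hform]
      simp only [Matrix.sub_apply, Matrix.smul_apply, Matrix.mul_apply,
        vecMulVec_apply, eV, one_mul, smul_eq_mul]
      ring
    unfold QForm
    rw [Kop_mixed_congr (rowdiff_refl Pv) hrd, Kop_sq_congr hrd]
  have hQLR : ∀ ΔL : Matrix (Fin (n - 1)) (Fin d) ℝ,
      QForm Pbar (V * L) (V * ΔL) = QForm Pbar (V * Rᵀ) (V * (ΔL * Q)) := by
    intro ΔL
    have h1 : (V * L) * (V * ΔL)ᵀ + (V * ΔL) * (V * L)ᵀ =
        (V * Rᵀ) * (V * (ΔL * Q))ᵀ + (V * (ΔL * Q)) * (V * Rᵀ)ᵀ := by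
      rw [hLQ]
      simp only [Matrix.transpose_mul, Matrix.transpose_transpose, Matrix.mul_assoc]
    have h2 : (V * ΔL) * (V * ΔL)ᵀ = (V * (ΔL * Q)) * (V * (ΔL * Q))ᵀ := by
      simp only [Matrix.transpose_mul, Matrix.transpose_transpose, Matrix.mul_assoc]
      rw [← Matrix.mul_assoc Q Qᵀ, hQQ, Matrix.one_mul]
    unfold QForm
    rw [hFLR, h1, h2]
  have qiff2 : (∀ ΔP, 0 ≤ QForm Pbar Pv ΔP) ↔
      (∀ ΔL : Matrix (Fin (n - 1)) (Fin d) ℝ, 0 ≤ QForm Pbar (V * L) (V * ΔL)) := by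
    constructor
    · intro h ΔL; rw [hVL]; exact h _
    · intro h ΔP
      rw [hQVL ΔP, ← hVL]
      exact h _
  have qiff3 : (∀ ΔL : Matrix (Fin (n - 1)) (Fin d) ℝ, 0 ≤ QForm Pbar (V * L) (V * ΔL)) ↔
      (∀ ΔL : Matrix (Fin (n - 1)) (Fin d) ℝ, 0 ≤ QForm Pbar (V * Rᵀ) (V * ΔL)) := by
    constructor
    · intro h ΔL
      calc (0:ℝ) ≤ QForm Pbar (V * L) (V * (ΔL * Qᵀ)) := h _
        _ = QForm Pbar (V * Rᵀ) (V * (ΔL * Qᵀ * Q)) := hQLR _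
        _ = QForm Pbar (V * Rᵀ) (V * ΔL) := by rw [Matrix.mul_assoc ΔL, hQ, Matrix.mul_one]
    · intro h ΔL
      rw [hQLR]
      exact h _
  exact ⟨⟨iff1, iff2, iff3⟩,
    and_congr iff1 (forall_congr' fun ΔP => by rw [hQP ΔP]),
    and_congr iff2 qiff2,
    and_congr iff3 qiff3⟩
end
end

section
/- Assume n ≤ d + 1. If L ∈ ℝ^{(n−1)×d} satisfies the first-order condition VᵀK*(F(VL))VL = 0 and the second-order necessary condition that ‖K((VL)(VΔL)ᵀ + (VΔL)(VL)ᵀ)‖² + 2⟨F(VL), K((VΔL)(VΔL)ᵀ)⟩ ≥ 0 for every ΔL ∈ ℝ^{(n−1)×d}, then L is a global minimizer of f_L: F(VL) = 0. -/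
open Matrix

attribute [local instance] Matrix.frobeniusNormedAddCommGroup Matrix.frobeniusNormedSpace

noncomputable section

section Aux

variable {n : ℕ}

lemma vmv_mul {k m p : Type*} [Fintype m] [Fintype p] (a : k → ℝ) (b : m → ℝ)
    (M : Matrix m p ℝ) :
    vecMulVec a b * M = vecMulVec a (Mᵀ *ᵥ b) := by
  ext i j
  simp [mul_apply, vecMulVec_apply, mulVec, dotProduct, Finset.mul_sum]
  exact Finset.sum_congr rfl fun k _ => by ring

lemma mul_vmv {k m p : Type*} [Fintype m] (M : Matrix k m ℝ) (a : m → ℝ) (b : p → ℝ) :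
    M * vecMulVec a b = vecMulVec (M *ᵥ a) b := by
  ext i j
  simp [mul_apply, vecMulVec_apply, mulVec, dotProduct, Finset.sum_mul, mul_assoc]

lemma vmv_transpose {k m : Type*} (a : k → ℝ) (b : m → ℝ) :
    (vecMulVec a b)ᵀ = vecMulVec b a := by
  ext i j; simp [vecMulVec_apply, transpose_apply, mul_comm]

lemma vmv_mulVec {k m : Type*} [Fintype m] (a : k → ℝ) (b : m → ℝ) (u : m → ℝ) :
    vecMulVec a b *ᵥ u = (b ⬝ᵥ u) • a := by
  ext i
  simp [vecMulVec_apply, mulVec, dotProduct, Finset.mul_sum]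
  rw [Finset.sum_mul]
  exact Finset.sum_congr rfl fun k _ => by ring

lemma vmv_zero_left {k m : Type*} (b : m → ℝ) :
    vecMulVec (0 : k → ℝ) b = 0 := by
  ext i j; simp [vecMulVec_apply]

lemma vmv_zero_right {k m : Type*} (a : k → ℝ) :
    vecMulVec a (0 : m → ℝ) = 0 := by
  ext i j; simp [vecMulVec_apply]

lemma trace_vmv (a b : Fin n → ℝ) : trace (vecMulVec a b) = a ⬝ᵥ b := by
  simp [trace, Matrix.diag, vecMulVec_apply, dotProduct]

lemma trace_diagonal_mul' (v : Fin n → ℝ) (A : Matrix (Fin n) (Fin n) ℝ) :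
    trace (diagonal v * A) = v ⬝ᵥ A.diag := by
  simp [trace, Matrix.diag, mul_apply, dotProduct, diagonal_apply, Finset.sum_ite_eq]

lemma Kop_zero : Kop (0 : Matrix (Fin n) (Fin n) ℝ) = 0 := by
  simp [Kop, Matrix.diag, vmv_zero_left, vmv_zero_right]

lemma Kop_smul (c : ℝ) (G : Matrix (Fin n) (Fin n) ℝ) : Kop (c • G) = c • Kop G := by
  ext i j
  simp [Kop, vecMulVec_apply, Matrix.diag, eV]
  ring

lemma Kop_diag_apply (G : Matrix (Fin n) (Fin n) ℝ) (i : Fin n) : Kop G i i = 0 := by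
  simp [Kop, vecMulVec_apply, eV, Matrix.diag]
  ring

lemma Kop_transpose (G : Matrix (Fin n) (Fin n) ℝ) (hG : Gᵀ = G) : (Kop G)ᵀ = Kop G := by
  ext i j
  simp [Kop, transpose_apply, vecMulVec_apply, Matrix.diag]
  have := congrFun (congrFun hG i) j
  simp [transpose_apply] at this
  rw [this]; ring

lemma adjointK (F A : Matrix (Fin n) (Fin n) ℝ) (hF : Fᵀ = F) :
    trace (Fᵀ * Kop A) = trace ((Kstar F)ᵀ * A) := by
  have h1 : trace (Fᵀ * Kop A)
      = (Fᵀ *ᵥ A.diag) ⬝ᵥ eV n + (Fᵀ *ᵥ eV n) ⬝ᵥ A.diag - 2 * trace (Fᵀ * A) := by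
    rw [Kop, Matrix.mul_sub, Matrix.mul_add, Matrix.mul_smul, trace_sub, trace_add,
      mul_vmv, mul_vmv, trace_vmv, trace_vmv, trace_smul]
    simp [smul_eq_mul]
  have h2 : trace ((Kstar F)ᵀ * A)
      = 2 * ((F *ᵥ eV n) ⬝ᵥ A.diag) - 2 * trace (Fᵀ * A) := by
    rw [Kstar]
    rw [Matrix.transpose_smul, Matrix.transpose_sub, Matrix.diagonal_transpose,
      Matrix.smul_mul, Matrix.sub_mul, trace_smul, trace_sub, trace_diagonal_mul']
    simp [smul_eq_mul]; ring
  rw [h1, h2, hF]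
  have h3 : (F *ᵥ A.diag) ⬝ᵥ eV n = (F *ᵥ eV n) ⬝ᵥ A.diag := by
    rw [dotProduct_comm, dotProduct_mulVec, ← mulVec_transpose, hF]
  rw [h3]; ring

/-- A matrix whose Gram trace is nonpositive is zero. -/
lemma eq_zero_of_trace_nonpos {m : Type*} [Fintype m]
    (M : Matrix m (Fin n) ℝ) (h : trace (Mᵀ * M) ≤ 0) : M = 0 := by
  have hexp : trace (Mᵀ * M) = ∑ i, ∑ j, (M j i) ^ 2 := by
    simp [trace, Matrix.diag, mul_apply, sq]
  have hnn : 0 ≤ ∑ i, ∑ j, (M j i) ^ 2 :=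
    Finset.sum_nonneg fun i _ => Finset.sum_nonneg fun j _ => sq_nonneg _
  have hzero : ∑ i, ∑ j, (M j i) ^ 2 = 0 := le_antisymm (hexp ▸ h) hnn
  ext i j
  have h1 := (Finset.sum_eq_zero_iff_of_nonneg
    (fun i _ => Finset.sum_nonneg fun j _ => sq_nonneg (M j i))).mp hzero j (Finset.mem_univ j)
  have h2 := (Finset.sum_eq_zero_iff_of_nonneg
    (fun k _ => sq_nonneg (M k j))).mp h1 i (Finset.mem_univ i)
  simpa using pow_eq_zero_iff (two_ne_zero) |>.mp h2

lemma projV (hn : 0 < n) (V : Matrix (Fin n) (Fin (n - 1)) ℝ)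
    (hV : Vᵀ * V = 1) (hVe : Vᵀ *ᵥ eV n = 0) :
    V * Vᵀ = 1 - ((n : ℝ)⁻¹) • vecMulVec (eV n) (eV n) := by
  set E : Matrix (Fin n) (Fin n) ℝ := vecMulVec (eV n) (eV n) with hE
  set N : Matrix (Fin n) (Fin n) ℝ := 1 - V * Vᵀ - ((n : ℝ)⁻¹) • E with hN
  have hne : (n : ℝ) ≠ 0 := Nat.cast_ne_zero.mpr hn.ne'
  have hEsymm : Eᵀ = E := by
    ext i j; simp [hE, vecMulVec_apply, eV]
  have hNsymm : Nᵀ = N := by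
    rw [hN, transpose_sub, transpose_sub, transpose_one, transpose_smul, hEsymm,
      transpose_mul, transpose_transpose]
  have hVEzero : (V * Vᵀ) * E = 0 := by
    rw [hE, Matrix.mul_assoc, mul_vmv, hVe, mul_vmv]
    ext i j; simp [vecMulVec_apply, mulVec_zero]
  have hEV : E * (V * Vᵀ) = 0 := by
    rw [hE, ← Matrix.mul_assoc, vmv_mul, hVe, vmv_mul]
    ext i j; simp [vecMulVec_apply, mulVec]
  have hEE : E * E = (n : ℝ) • E := by
    rw [hE, vmv_mul]
    ext i j
    simp [vecMulVec_apply, mulVec, dotProduct, eV]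
  have hVV : (V * Vᵀ) * (V * Vᵀ) = V * Vᵀ := by
    calc (V * Vᵀ) * (V * Vᵀ) = V * (Vᵀ * V) * Vᵀ := by
          rw [Matrix.mul_assoc, Matrix.mul_assoc, Matrix.mul_assoc]
      _ = V * Vᵀ := by rw [hV, Matrix.mul_one]
  have hN2 : N * N = N := by
    rw [hN]
    simp only [Matrix.sub_mul, Matrix.mul_sub, Matrix.one_mul, Matrix.mul_one,
      Matrix.smul_mul, Matrix.mul_smul, hVV, hVEzero, hEV, hEE, smul_smul,
      inv_mul_cancel₀ hne, one_smul, smul_zero, smul_sub, sub_zero, zero_sub]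
    abel
  have htrVV : trace (V * Vᵀ) = (n : ℝ) - 1 := by
    rw [trace_mul_comm, hV, trace_one]
    simp only [Fintype.card_fin]
    have h1n : (1 : ℕ) ≤ n := hn
    rw [Nat.cast_sub h1n, Nat.cast_one]
  have htrE : trace E = (n : ℝ) := by
    rw [hE, trace_vmv]
    simp [dotProduct, eV]
  have htrN : trace N = 0 := by
    rw [hN, trace_sub, trace_sub, trace_smul, trace_one, htrVV, htrE]
    simp only [Fintype.card_fin, smul_eq_mul]
    rw [inv_mul_cancel₀ hne]
    ring
  have hNNt : N = Nᵀ * N := by rw [hNsymm, hN2]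
  have hNzero : N = 0 := eq_zero_of_trace_nonpos N (by rw [← hNNt, htrN])
  have : V * Vᵀ = 1 - ((n : ℝ)⁻¹) • E - N := by rw [hN]; abel
  rw [this, hNzero, sub_zero]

end Aux

/-- if `n ≤ d + 1`, any `L` satisfying the first- and second-order
necessary conditions for `f_L` is a global minimizer: `F(VL) = 0`. -/
theorem stmt_18 {n d : ℕ} (hn : 0 < n) (hd : 0 < d) (hnd : n ≤ d + 1)
    (Pbar : Matrix (Fin n) (Fin d) ℝ) (hPbar : Pbarᵀ *ᵥ eV n = 0)
    (V : Matrix (Fin n) (Fin (n - 1)) ℝ) (hV : Vᵀ * V = 1) (hVe : Vᵀ *ᵥ eV n = 0)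
    (L : Matrix (Fin (n - 1)) (Fin d) ℝ)
    (hstat : Vᵀ * Kstar (Fm Pbar (V * L)) * (V * L) = 0)
    (hsecond : ∀ ΔL : Matrix (Fin (n - 1)) (Fin d) ℝ, 0 ≤ QForm Pbar (V * L) (V * ΔL)) :
    Fm Pbar (V * L) = 0 := by
  set P : Matrix (Fin n) (Fin d) ℝ := V * L with hP
  set F : Matrix (Fin n) (Fin n) ℝ := Fm Pbar P with hFdef
  set S : Matrix (Fin n) (Fin n) ℝ := Kstar F with hSdef
  set E : Matrix (Fin n) (Fin n) ℝ := vecMulVec (eV n) (eV n) with hE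
  have hproj : V * Vᵀ = 1 - ((n : ℝ)⁻¹) • E := projV hn V hV hVe
  have hone : (1 : Matrix (Fin n) (Fin n) ℝ) = V * Vᵀ + ((n : ℝ)⁻¹) • E := by
    rw [hproj]; abel
  have hGsymm : (P * Pᵀ)ᵀ = P * Pᵀ := by rw [transpose_mul, transpose_transpose]
  have hGbsymm : (Pbar * Pbarᵀ)ᵀ = Pbar * Pbarᵀ := by rw [transpose_mul, transpose_transpose]
  have hFsymm : Fᵀ = F := by
    rw [hFdef, Fm, transpose_sub, Kop_transpose _ hGsymm, Kop_transpose _ hGbsymm]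
  have hFdiag : ∀ i, F i i = 0 := fun i => by
    simp [hFdef, Fm, Kop_diag_apply]
  have hSsymm : Sᵀ = S := by
    rw [hSdef, Kstar, transpose_smul, transpose_sub, diagonal_transpose, hFsymm]
  have hSe : S *ᵥ eV n = 0 := by
    rw [hSdef, Kstar]
    ext i
    simp only [mulVec, dotProduct, Matrix.sub_apply, Matrix.smul_apply, diagonal_apply, eV,
      smul_eq_mul, mul_one, Pi.zero_apply]
    have hsplit : ∀ x, 2 * ((if i = x then ∑ k, F i k else 0) - F i x)
        = (if i = x then 2 * ∑ k, F i k else 0) - 2 * F i x := by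
      intro x; split <;> ring
    simp_rw [hsplit]
    rw [Finset.sum_sub_distrib, Finset.sum_ite_eq, if_pos (Finset.mem_univ i), Finset.mul_sum]
    ring_nf
  -- E * S = 0 and S * E = 0
  have hES : E * S = 0 := by
    rw [hE, vmv_mul]
    have : Sᵀ *ᵥ eV n = 0 := by rw [hSsymm, hSe]
    rw [this, vmv_zero_right]
  have hSE : S * E = 0 := by
    rw [hE, mul_vmv, hSe, vmv_zero_left]
  -- first order: S * P = 0
  have hSP : S * P = 0 := by
    have h1 : S * P = (V * Vᵀ) * (S * P) + ((n : ℝ)⁻¹) • (E * (S * P)) := by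
      calc S * P = (1 : Matrix (Fin n) (Fin n) ℝ) * (S * P) := by rw [Matrix.one_mul]
        _ = (V * Vᵀ + ((n : ℝ)⁻¹) • E) * (S * P) := by rw [← hone]
        _ = (V * Vᵀ) * (S * P) + ((n : ℝ)⁻¹) • (E * (S * P)) := by
            rw [Matrix.add_mul, Matrix.smul_mul]
    have h2 : (V * Vᵀ) * (S * P) = 0 := by
      rw [Matrix.mul_assoc V Vᵀ (S * P), ← Matrix.mul_assoc Vᵀ S P]
      rw [hstat, Matrix.mul_zero]
    have h3 : E * (S * P) = 0 := by rw [← Matrix.mul_assoc, hES, Matrix.zero_mul]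
    rw [h1, h2, h3, smul_zero, add_zero]
  -- key consequence used in both cases
  have final : trace (Sᵀ * (Pbar * Pbarᵀ)) = - trace (Fᵀ * F) := by
    have h1 : trace (Fᵀ * Kop (Pbar * Pbarᵀ)) = trace (Sᵀ * (Pbar * Pbarᵀ)) :=
      adjointK F _ hFsymm
    have h2 : trace (Fᵀ * Kop (P * Pᵀ)) = trace (Sᵀ * (P * Pᵀ)) := adjointK F _ hFsymm
    have h3 : trace (Sᵀ * (P * Pᵀ)) = 0 := by
      rw [hSsymm, ← Matrix.mul_assoc, hSP, Matrix.zero_mul, trace_zero]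
    have h4 : Kop (Pbar * Pbarᵀ) = Kop (P * Pᵀ) - F := by
      rw [hFdef, Fm]; abel
    rw [← h1, h4, Matrix.mul_sub, trace_sub, h2, h3, zero_sub]
  -- goal reduction: suffices trace (Fᵀ F) ≤ 0
  have suff : 0 ≤ trace (Sᵀ * (Pbar * Pbarᵀ)) → Fm Pbar (V * L) = 0 := by
    intro h
    have : trace (Fᵀ * F) ≤ 0 := by rw [final] at h; linarith
    exact eq_zero_of_trace_nonpos F this
  by_cases hker : ∃ w : Fin d → ℝ, w ≠ 0 ∧ P *ᵥ w = 0
  · -- degenerate case: S is PSD on centered vectors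
    obtain ⟨w, hw0, hPw⟩ := hker
    have hww : 0 < w ⬝ᵥ w := by
      have hnn : 0 ≤ w ⬝ᵥ w := Finset.sum_nonneg fun i _ => mul_self_nonneg _
      rcases hnn.lt_or_eq with h | h
      · exact h
      · exfalso
        apply hw0
        ext j
        have h1 := (Finset.sum_eq_zero_iff_of_nonneg
          (fun i _ => mul_self_nonneg (w i))).mp h.symm j (Finset.mem_univ j)
        simpa using mul_self_eq_zero.mp h1
    have hPSD : ∀ u : Fin n → ℝ, eV n ⬝ᵥ u = 0 → 0 ≤ u ⬝ᵥ (S *ᵥ u) := by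
      intro u hu
      have hVVu : V *ᵥ (Vᵀ *ᵥ u) = u := by
        rw [mulVec_mulVec, hproj, Matrix.sub_mulVec, Matrix.one_mulVec, Matrix.smul_mulVec,
          hE, vmv_mulVec, hu, zero_smul, smul_zero, sub_zero]
      set ΔL : Matrix (Fin (n - 1)) (Fin d) ℝ := vecMulVec (Vᵀ *ᵥ u) w with hΔL
      have hVΔL : V * ΔL = vecMulVec u w := by
        rw [hΔL, mul_vmv, hVVu]
      have hq := hsecond ΔL
      rw [QForm, hVΔL] at hq
      have e1 : P * (vecMulVec u w)ᵀ = 0 := by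
        rw [vmv_transpose, mul_vmv, hPw, vmv_zero_left]
      have e2 : vecMulVec u w * Pᵀ = 0 := by
        rw [vmv_mul, transpose_transpose, hPw, vmv_zero_right]
      have e3 : vecMulVec u w * (vecMulVec u w)ᵀ = (w ⬝ᵥ w) • vecMulVec u u := by
        rw [vmv_transpose, vmv_mul, vmv_transpose, vmv_mulVec]
        ext i j
        simp [vecMulVec_apply, Pi.smul_apply, smul_eq_mul]
        ring
      rw [e1, e2, e3, add_zero, Kop_zero, Kop_smul] at hq
      have e4 : trace ((Fm Pbar P)ᵀ * (w ⬝ᵥ w) • Kop (vecMulVec u u))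
          = (w ⬝ᵥ w) * (u ⬝ᵥ (S *ᵥ u)) := by
        rw [Matrix.mul_smul, trace_smul, smul_eq_mul, ← hFdef,
          adjointK F _ hFsymm, ← hSdef, hSsymm, mul_vmv, trace_vmv]
        rw [dotProduct_comm (S *ᵥ u) u]
      rw [e4] at hq
      simp only [norm_zero, ne_eq, OfNat.ofNat_ne_zero, not_false_eq_true, zero_pow,
        zero_add] at hq
      nlinarith
    apply suff
    have hexp : trace (Sᵀ * (Pbar * Pbarᵀ))
        = ∑ j, (fun i => Pbar i j) ⬝ᵥ (S *ᵥ (fun i => Pbar i j)) := by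
      rw [hSsymm]
      simp only [trace, Matrix.diag, mul_apply, mulVec, dotProduct, transpose_apply,
        Finset.mul_sum, Finset.sum_mul]
      rw [Finset.sum_congr rfl fun x _ => Finset.sum_comm]
      rw [Finset.sum_comm]
      apply Finset.sum_congr rfl; intro j _
      apply Finset.sum_congr rfl; intro a _
      apply Finset.sum_congr rfl; intro b _
      ring
    rw [hexp]
    apply Finset.sum_nonneg
    intro j _
    apply hPSD
    have hcol := congrFun hPbar j
    simp only [mulVec, dotProduct, transpose_apply, Pi.zero_apply, eV, mul_one] at hcol
    simpa [dotProduct, eV] using hcol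
  · -- full rank case: S = 0
    push_neg at hker
    have hLinj : Function.Injective (Matrix.mulVecLin L) := by
      rw [← LinearMap.ker_eq_bot, LinearMap.ker_eq_bot']
      intro w hw
      by_contra hw0
      apply hker w hw0
      have : L *ᵥ w = 0 := hw
      rw [hP, ← mulVec_mulVec, this, mulVec_zero]
    have hdle : d ≤ n - 1 := by
      have := LinearMap.finrank_le_finrank_of_injective hLinj
      simpa [Module.finrank_pi] using this
    have hdeq : d = n - 1 := by omega
    have hLsurj : Function.Surjective (Matrix.mulVecLin L) := by
      rw [← LinearMap.injective_iff_surjective_of_finrank_eq_finrank (by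
        simp [Module.finrank_pi, hdeq])]
      exact hLinj
    have hSVx : ∀ x : Fin (n - 1) → ℝ, S *ᵥ (V *ᵥ x) = 0 := by
      intro x
      obtain ⟨wv, hwv⟩ := hLsurj x
      have hwv' : L *ᵥ wv = x := hwv
      rw [← hwv', mulVec_mulVec, mulVec_mulVec, Matrix.mul_assoc, ← hP, hSP,
        Matrix.zero_mulVec]
    have hSV : S * V = 0 := by
      ext i j
      have h1 : V *ᵥ (Pi.single j 1) = fun k => V k j := by
        ext k
        simp [mulVec, dotProduct, Pi.single_apply]
      have h2 := congrFun (hSVx (Pi.single j 1)) i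
      rw [h1] at h2
      simpa [mulVec, dotProduct, mul_apply] using h2
    have hSzero : S = 0 := by
      calc S = S * 1 := by rw [Matrix.mul_one]
        _ = S * (V * Vᵀ) + ((n : ℝ)⁻¹) • (S * E) := by
            rw [hone, Matrix.mul_add, Matrix.mul_smul]
        _ = 0 := by rw [← Matrix.mul_assoc, hSV, Matrix.zero_mul, hSE, smul_zero, add_zero]
    -- S = 0 forces F = 0
    have hFd : F = diagonal (F *ᵥ eV n) := by
      have h1 : diagonal (F *ᵥ eV n) - F = 0 := by
        have := hSzero
        rw [hSdef, Kstar] at this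
        have h2 := smul_eq_zero.mp this
        rcases h2 with h2 | h2
        · norm_num at h2
        · exact h2
      exact (sub_eq_zero.mp h1).symm
    show F = 0
    ext i j
    by_cases hij : i = j
    · subst hij; exact hFdiag i
    · rw [hFd]
      exact diagonal_apply_ne _ hij
end
end
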